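/- For all nonempty metric spaces X and Y with d̂(X,Y) < ∞, one has D(X,Y) ≤ ln(1 + 2·d̂(X,Y)). -/

import Mathlib

open ENNReal

/-- `f` is an `(A,B)`-quasi-isometric embedding. -/
def QIEmb {X Y : Type*} [MetricSpace X] [MetricSpace Y] (A B : ℝ) (f : X → Y) : Prop :=
  ∀ x x' : X, (1 / A) * dist x x' - B ≤ dist (f x) (f x') ∧
    dist (f x) (f x') ≤ A * dist x x' + B

/-- `X` and `Y` are `(A,B,C)`-quasi-isometric. -/
def QuasiIsometric (X Y : Type*) [MetricSpace X] [MetricSpace Y] (A B C : ℝ) : Prop :=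
  ∃ (f : X → Y) (g : Y → X), QIEmb A B f ∧ QIEmb A B g ∧
    (∀ x : X, dist (g (f x)) x ≤ C) ∧ (∀ y : Y, dist (f (g y)) y ≤ C)

/-- The quasi-isometric distance `d̂`. -/
noncomputable def qiDist (X Y : Type*) [MetricSpace X] [MetricSpace Y] : ℝ≥0∞ :=
  sInf {e : ℝ≥0∞ | ∃ r : ℝ, 0 < r ∧ e = ENNReal.ofReal r ∧ QuasiIsometric X Y (1 + r) r r}

/-- A correspondence between X and Y: both projections are surjective. -/
def IsCorrespondence {X Y : Type*} (R : Set (X × Y)) : Prop :=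
  (∀ x : X, ∃ y : Y, (x, y) ∈ R) ∧ (∀ y : Y, ∃ x : X, (x, y) ∈ R)

/-- The quasi-isometric distortion of a correspondence, in [0,∞]. -/
noncomputable def qDis {X Y : Type*} [MetricSpace X] [MetricSpace Y]
    (R : Set (X × Y)) : ℝ≥0∞ :=
  sInf {e : ℝ≥0∞ | ∃ r : ℝ, 0 < r ∧ e = ENNReal.ofReal r ∧
    ∀ p ∈ R, ∀ q ∈ R,
      Real.exp (-r) * dist p.2 q.2 - Real.exp r + 1 ≤ dist p.1 q.1 ∧
      dist p.1 q.1 ≤ Real.exp r * dist p.2 q.2 + Real.exp (2 * r) - Real.exp r}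

/-- The distance D, infimum of quasi-isometric distortions of correspondences. -/
noncomputable def Ddist (X Y : Type*) [MetricSpace X] [MetricSpace Y] : ℝ≥0∞ :=
  ⨅ R : {R : Set (X × Y) // IsCorrespondence R}, qDis R.1

/-!
Take `(1 + r, r, r)`-quasi-isometries `f : X → Y`, `g : Y → X` and the correspondence formed by
the graph of `f` together with the transposed graph of `g`. Put `c = 1 + 2r`. Between two points of
the same graph the quasi-isometry inequalities apply directly; for `(x, f x)` and `(g y, y)` one
passes through `f (g y)`, which is `r`-close to `y`. In every case distances in `X` and `Y` agree
up to `d ↦ c d + c (c - 1)`, which is exactly the distortion condition with parameter `log c`.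
Letting `r` decrease to `d̂(X, Y)` gives the bound by continuity of `log`.
-/

section

variable {X Y : Type*}

def graphCorrespondence (f : X → Y) (g : Y → X) : Set (X × Y) :=
  Set.range (fun x => (x, f x)) ∪ Set.range (fun y => (g y, y))

theorem isCorrespondence_graphCorrespondence (f : X → Y) (g : Y → X) :
    IsCorrespondence (graphCorrespondence f g) :=
  ⟨fun x => ⟨f x, Or.inl ⟨x, rfl⟩⟩, fun y => ⟨g y, Or.inr ⟨y, rfl⟩⟩⟩

variable [MetricSpace X] [MetricSpace Y]

theorem QIEmb.dist_le {A B : ℝ} {f : X → Y} (hA : 0 < A) (hf : QIEmb A B f) (x x' : X) :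
    dist x x' ≤ A * dist (f x) (f x') + A * B := by
  have h := (hf x x').1
  rw [one_div, inv_mul_eq_div, sub_le_iff_le_add, div_le_iff₀ hA] at h
  linarith

theorem QIEmb.dist_bounds {r : ℝ} {f : X → Y} (hr : 0 ≤ r) (hf : QIEmb (1 + r) r f)
    (x x' : X) :
    dist (f x) (f x') ≤ (1 + 2 * r) * dist x x' + 2 * r * (1 + 2 * r) ∧
      dist x x' ≤ (1 + 2 * r) * dist (f x) (f x') + 2 * r * (1 + 2 * r) := by
  have hup := (hf x x').2
  have hlo := hf.dist_le (by linarith) x x'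
  have := dist_nonneg (x := x) (y := x')
  have := dist_nonneg (x := f x) (y := f x')
  constructor <;> nlinarith

theorem QIEmb.dist_bounds_of_comp {r : ℝ} {f : X → Y} {g : Y → X} (hr : 0 ≤ r)
    (hf : QIEmb (1 + r) r f) (hfg : ∀ y, dist (f (g y)) y ≤ r) (x : X) (y : Y) :
    dist (f x) y ≤ (1 + 2 * r) * dist x (g y) + 2 * r * (1 + 2 * r) ∧
      dist x (g y) ≤ (1 + 2 * r) * dist (f x) y + 2 * r * (1 + 2 * r) := by
  have hfgy := hfg y
  have hup := (hf x (g y)).2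
  have hlo := hf.dist_le (by linarith) x (g y)
  have h₁ := dist_triangle (f x) (f (g y)) y
  have h₂ := dist_triangle_right (f x) (f (g y)) y
  have := dist_nonneg (x := x) (y := g y)
  have := dist_nonneg (x := f x) (y := y)
  constructor <;> nlinarith

theorem dist_bounds_graphCorrespondence {r : ℝ} {f : X → Y} {g : Y → X}
    (hr : 0 ≤ r) (hf : QIEmb (1 + r) r f) (hg : QIEmb (1 + r) r g)
    (hfg : ∀ y, dist (f (g y)) y ≤ r) :
    ∀ p ∈ graphCorrespondence f g, ∀ q ∈ graphCorrespondence f g,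
      dist p.2 q.2 ≤ (1 + 2 * r) * dist p.1 q.1 + 2 * r * (1 + 2 * r) ∧
        dist p.1 q.1 ≤ (1 + 2 * r) * dist p.2 q.2 + 2 * r * (1 + 2 * r) := by
  rintro _ (⟨x, rfl⟩ | ⟨y, rfl⟩) _ (⟨x', rfl⟩ | ⟨y', rfl⟩)
  · exact hf.dist_bounds hr x x'
  · exact hf.dist_bounds_of_comp hr hfg x y'
  · simpa only [dist_comm] using hf.dist_bounds_of_comp hr hfg x' y
  · exact (hg.dist_bounds hr y y').symm

theorem qDis_le_ofReal_log {R : Set (X × Y)} {c : ℝ} (hc : 1 < c)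
    (h : ∀ p ∈ R, ∀ q ∈ R, dist p.2 q.2 ≤ c * dist p.1 q.1 + (c - 1) * c ∧
      dist p.1 q.1 ≤ c * dist p.2 q.2 + (c - 1) * c) :
    qDis R ≤ ENNReal.ofReal (Real.log c) := by
  have hc₀ : 0 < c := by linarith
  refine sInf_le ⟨Real.log c, Real.log_pos hc, rfl, fun p hp q hq => ?_⟩
  rw [Real.exp_neg, two_mul, Real.exp_add, Real.exp_log hc₀]
  obtain ⟨hYX, hXY⟩ := h p hp q hq
  constructor
  · have : c⁻¹ * dist p.2 q.2 ≤ dist p.1 q.1 + (c - 1) := by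
      rw [inv_mul_le_iff₀ hc₀]; linarith
    linarith
  · linarith

theorem Ddist_le_ofReal_log_of_quasiIsometric {r : ℝ} (hr : 0 < r)
    (h : QuasiIsometric X Y (1 + r) r r) :
    Ddist X Y ≤ ENNReal.ofReal (Real.log (1 + 2 * r)) := by
  obtain ⟨f, g, hf, hg, -, hfg⟩ := h
  have hbounds := dist_bounds_graphCorrespondence hr.le hf hg hfg
  refine (iInf_le _ ⟨_, isCorrespondence_graphCorrespondence f g⟩).trans ?_
  refine qDis_le_ofReal_log (by linarith) fun p hp q hq => ?_
  simpa only [add_sub_cancel_left] using hbounds p hp q hq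

theorem exists_quasiIsometric_of_qiDist_lt {s : ℝ} (h : qiDist X Y < ENNReal.ofReal s) :
    ∃ r, 0 < r ∧ r < s ∧ QuasiIsometric X Y (1 + r) r r := by
  obtain ⟨_, ⟨r, hr, rfl, hQI⟩, hrs⟩ := sInf_lt_iff.1 h
  exact ⟨r, hr, (ENNReal.ofReal_lt_ofReal_iff_of_nonneg hr.le).1 hrs, hQI⟩

end

theorem Ddist_le_log_qiDist_general
    (X Y : Type*) [MetricSpace X] [MetricSpace Y]
    (hfin : qiDist X Y < ⊤) :
    Ddist X Y ≤ ENNReal.ofReal (Real.log (1 + 2 * (qiDist X Y).toReal)) := by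
  set t := (qiDist X Y).toReal
  have ht : 0 ≤ t := ENNReal.toReal_nonneg
  have hcont : ContinuousAt (fun s => ENNReal.ofReal (Real.log (1 + 2 * s))) t :=
    ENNReal.continuous_ofReal.continuousAt.comp
      ((Real.continuousAt_log (by positivity)).comp (by fun_prop))
  refine ge_of_tendsto (hcont.tendsto.mono_left (nhdsWithin_le_nhds (s := Set.Ioi t))) ?_
  filter_upwards [self_mem_nhdsWithin] with s (hts : t < s)
  have hlt : qiDist X Y < ENNReal.ofReal s := by
    rwa [← ENNReal.ofReal_toReal hfin.ne, ENNReal.ofReal_lt_ofReal_iff (ht.trans_lt hts)]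
  obtain ⟨r, hr, hrs, hQI⟩ := exists_quasiIsometric_of_qiDist_lt hlt
  exact (Ddist_le_ofReal_log_of_quasiIsometric hr hQI).trans
    (ENNReal.ofReal_le_ofReal (Real.log_le_log (by linarith) (by linarith)))

/-- D(X,Y) ≤ ln(1 + 2·d̂(X,Y)) whenever the quasi-isometric distance is finite. -/
theorem Ddist_le_log_qiDist
    (X Y : Type*) [MetricSpace X] [MetricSpace Y] [Nonempty X] [Nonempty Y]
    (hfin : qiDist X Y < ⊤) :
    Ddist X Y ≤ ENNReal.ofReal (Real.log (1 + 2 * (qiDist X Y).toReal)) :=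
  Ddist_le_log_qiDist_general X Y hfin
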